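/- Let 𝒳 ⊆ ℝ^d be a closed convex set containing the origin, let V ∈ ℝ^{d×d} be positive definite, let â_1, …, â_n ∈ ℝ^d, let b ∈ ℝ^n with b_min := min_{i∈[n]} b_i > 0, and let β ≥ 0. Suppose x̃ ∈ 𝒳 satisfies â_iᵀ x̃ − β‖x̃‖_{V^{-1}} ≤ b_i for all i ∈ [n]. Then the maximum γ := max{ μ ∈ [0,1] : μ x̃ ∈ 𝒳 and â_iᵀ(μ x̃) + β‖μ x̃‖_{V^{-1}} ≤ b_i for all i ∈ [n] } exists and satisfies γ ≥ 1 − (2/b_min) · β‖γ x̃‖_{V^{-1}}. -/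

import Mathlib

/-!
Constraints and membership in `𝒳` are closed conditions on the scaling `μ ∈ [0, 1]`, so the set
of safe scalings is compact and has a greatest element `γ` once it is nonempty. Since
`μ ↦ âᵢᵀ(μ x̃) + β‖μ x̃‖` is linear in `μ ≥ 0`, the optimistic constraint
`âᵢᵀ x̃ ≤ bᵢ + β‖x̃‖` shows that `μ₀ = b_min / (b_min + 2β‖x̃‖)` is safe. Hence `γ ≥ μ₀`, which
rearranges to the claimed bound.
-/

open Matrix

/-- Weighted norm `‖x‖_M := √(xᵀ M x)`. -/
noncomputable def wnorm {d : ℕ} (M : Matrix (Fin d) (Fin d) ℝ) (x : Fin d → ℝ) : ℝ :=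
  Real.sqrt (x ⬝ᵥ M.mulVec x)

section SafeScaling

variable {d n : ℕ}

lemma wnorm_nonneg (M : Matrix (Fin d) (Fin d) ℝ) (x : Fin d → ℝ) : 0 ≤ wnorm M x :=
  Real.sqrt_nonneg _

lemma wnorm_smul (M : Matrix (Fin d) (Fin d) ℝ) (x : Fin d → ℝ) (μ : ℝ) :
    wnorm M (μ • x) = |μ| * wnorm M x := by
  unfold wnorm
  rw [Matrix.mulVec_smul, smul_dotProduct, dotProduct_smul, smul_eq_mul, smul_eq_mul,
    ← mul_assoc, ← sq, Real.sqrt_mul (sq_nonneg μ), Real.sqrt_sq_eq_abs]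

lemma continuous_wnorm (M : Matrix (Fin d) (Fin d) ℝ) : Continuous (wnorm M) := by
  unfold wnorm
  fun_prop

/-- The scalings `μ` among which line 10 of OSOCO picks the largest. -/
def safeScalings (𝒳 : Set (Fin d → ℝ)) (M : Matrix (Fin d) (Fin d) ℝ) (a : Fin n → Fin d → ℝ)
    (b : Fin n → ℝ) (β : ℝ) (x : Fin d → ℝ) : Set ℝ :=
  {μ | μ ∈ Set.Icc (0 : ℝ) 1 ∧ μ • x ∈ 𝒳 ∧ ∀ i, a i ⬝ᵥ (μ • x) + β * wnorm M (μ • x) ≤ b i}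

lemma isCompact_safeScalings {𝒳 : Set (Fin d → ℝ)} (h𝒳 : IsClosed 𝒳)
    (M : Matrix (Fin d) (Fin d) ℝ) (a : Fin n → Fin d → ℝ) (b : Fin n → ℝ) (β : ℝ)
    (x : Fin d → ℝ) : IsCompact (safeScalings 𝒳 M a b β x) := by
  have hmem : IsClosed {μ : ℝ | μ • x ∈ 𝒳} := h𝒳.preimage (by fun_prop)
  have hcons : IsClosed {μ : ℝ | ∀ i, a i ⬝ᵥ (μ • x) + β * wnorm M (μ • x) ≤ b i} := by
    rw [Set.ofPred_forall]
    exact isClosed_iInter fun i =>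
      isClosed_le (by have := continuous_wnorm M; fun_prop) continuous_const
  exact isCompact_Icc.inter_right (hmem.inter hcons)

lemma pessimistic_le_of_optimistic_le {M : Matrix (Fin d) (Fin d) ℝ} {a x : Fin d → ℝ}
    {bᵢ bmin β μ : ℝ} (hμ : μ ∈ Set.Icc (0 : ℝ) 1) (hbᵢ : bmin ≤ bᵢ)
    (hopt : a ⬝ᵥ x - β * wnorm M x ≤ bᵢ) (hμbmin : μ * (bmin + 2 * (β * wnorm M x)) ≤ bmin) :
    a ⬝ᵥ (μ • x) + β * wnorm M (μ • x) ≤ bᵢ := by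
  obtain ⟨hμ0, hμ1⟩ := hμ
  rw [dotProduct_smul, smul_eq_mul, wnorm_smul, abs_of_nonneg hμ0]
  calc μ * (a ⬝ᵥ x) + β * (μ * wnorm M x)
      ≤ μ * (bᵢ + β * wnorm M x) + μ * (β * wnorm M x) := by
        have := mul_le_mul_of_nonneg_left (show a ⬝ᵥ x ≤ bᵢ + β * wnorm M x by linarith) hμ0
        linarith
    _ = μ * bᵢ + μ * (2 * (β * wnorm M x)) := by ring
    _ ≤ μ * bᵢ + (1 - μ) * bmin := by linarith
    _ ≤ μ * bᵢ + (1 - μ) * bᵢ := by gcongr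
    _ = bᵢ := by ring

lemma div_mem_safeScalings {𝒳 : Set (Fin d → ℝ)} (hconv : Convex ℝ 𝒳) (h0 : 0 ∈ 𝒳)
    {M : Matrix (Fin d) (Fin d) ℝ} {a : Fin n → Fin d → ℝ} {b : Fin n → ℝ} {bmin β : ℝ}
    (hb : ∀ i, bmin ≤ b i) (hbpos : 0 < bmin) (hβ : 0 ≤ β) {x : Fin d → ℝ} (hx : x ∈ 𝒳)
    (hopt : ∀ i, a i ⬝ᵥ x - β * wnorm M x ≤ b i) :
    bmin / (bmin + 2 * (β * wnorm M x)) ∈ safeScalings 𝒳 M a b β x := by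
  have hβw : 0 ≤ β * wnorm M x := mul_nonneg hβ (wnorm_nonneg M x)
  have hden : 0 < bmin + 2 * (β * wnorm M x) := by positivity
  set μ₀ := bmin / (bmin + 2 * (β * wnorm M x))
  have hμ₀bmin : μ₀ * (bmin + 2 * (β * wnorm M x)) = bmin := div_mul_cancel₀ _ hden.ne'
  have hμ₀ : μ₀ ∈ Set.Icc (0 : ℝ) 1 := ⟨by positivity, (div_le_one hden).2 (by linarith)⟩
  refine ⟨hμ₀, ?_, fun i => pessimistic_le_of_optimistic_le hμ₀ (hb i) (hopt i) hμ₀bmin.le⟩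
  simpa using hconv.smul_mem_of_zero_mem h0 hx hμ₀

end SafeScaling

theorem stmt1_general {d n : ℕ} (𝒳 : Set (Fin d → ℝ)) (hclosed : IsClosed 𝒳)
    (hconv : Convex ℝ 𝒳) (h0 : (0 : Fin d → ℝ) ∈ 𝒳)
    (V : Matrix (Fin d) (Fin d) ℝ)
    (ahat : Fin n → Fin d → ℝ) (b : Fin n → ℝ) (bmin : ℝ)
    (hbmin : IsLeast (Set.range b) bmin) (hbpos : 0 < bmin)
    (β : ℝ) (hβ : 0 ≤ β)
    (xt : Fin d → ℝ) (hxt : xt ∈ 𝒳)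
    (hopt : ∀ i, ahat i ⬝ᵥ xt - β * wnorm V⁻¹ xt ≤ b i) :
    ∃ γ : ℝ,
      IsGreatest {μ : ℝ | μ ∈ Set.Icc (0 : ℝ) 1 ∧ μ • xt ∈ 𝒳 ∧
          ∀ i, ahat i ⬝ᵥ (μ • xt) + β * wnorm V⁻¹ (μ • xt) ≤ b i} γ ∧
        1 - (2 / bmin) * (β * wnorm V⁻¹ (γ • xt)) ≤ γ := by
  have hμ₀ := div_mem_safeScalings hconv h0 (fun i => hbmin.2 ⟨i, rfl⟩) hbpos hβ hxt hopt
  obtain ⟨γ, hγ⟩ := (isCompact_safeScalings hclosed V⁻¹ ahat b β xt).exists_isGreatest ⟨_, hμ₀⟩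
  refine ⟨γ, hγ, ?_⟩
  have hγ0 : 0 ≤ γ := hγ.1.1.1
  set c := wnorm V⁻¹ xt
  have hden : 0 < bmin + 2 * (β * c) := by
    have := wnorm_nonneg V⁻¹ xt
    positivity
  have hkey : bmin ≤ γ * (bmin + 2 * (β * c)) := (div_le_iff₀ hden).1 (hγ.2 hμ₀)
  rw [wnorm_smul, abs_of_nonneg hγ0, ← mul_le_mul_iff_right₀ hbpos]
  calc bmin * (1 - 2 / bmin * (β * (γ * c))) = bmin - 2 * (β * (γ * c)) := by field_simp
    _ ≤ bmin * γ := by linarith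

theorem stmt1 {d n : ℕ} (𝒳 : Set (Fin d → ℝ)) (hclosed : IsClosed 𝒳)
    (hconv : Convex ℝ 𝒳) (h0 : (0 : Fin d → ℝ) ∈ 𝒳)
    (V : Matrix (Fin d) (Fin d) ℝ) (hV : V.PosDef)
    (ahat : Fin n → Fin d → ℝ) (b : Fin n → ℝ) (bmin : ℝ)
    (hbmin : IsLeast (Set.range b) bmin) (hbpos : 0 < bmin)
    (β : ℝ) (hβ : 0 ≤ β)
    (xt : Fin d → ℝ) (hxt : xt ∈ 𝒳)
    (hopt : ∀ i, ahat i ⬝ᵥ xt - β * wnorm V⁻¹ xt ≤ b i) :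
    ∃ γ : ℝ,
      IsGreatest {μ : ℝ | μ ∈ Set.Icc (0 : ℝ) 1 ∧ μ • xt ∈ 𝒳 ∧
          ∀ i, ahat i ⬝ᵥ (μ • xt) + β * wnorm V⁻¹ (μ • xt) ≤ b i} γ ∧
        1 - (2 / bmin) * (β * wnorm V⁻¹ (γ • xt)) ≤ γ :=
  stmt1_general 𝒳 hclosed hconv h0 V ahat b bmin hbmin hbpos β hβ xt hxt hopt
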